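/- Let α > 0, β > 0, λ ∈ ℝ, and let s > 0 be a real number. Then ∫₀^∞ e^{−st} · (∑_{k=0}^∞ λ^k · t^{αk+β−1} · (ln t − ψ(αk+β)) / (k! · Γ(αk+β))) dt = − ln s · s^{−β} · exp(λ · s^{−α}). (The integrand series is the term-by-term derivative with respect to β of t^{β−1} W_{α,β}(λ t^α).) -/

import Mathlib

open Real MeasureTheory

/-- The digamma function `ψ(x) = the logarithmic derivative of Γ`, i.e. the derivative of `log ∘ Γ`. -/
noncomputable def digamma (x : ℝ) : ℝ := deriv (fun y : ℝ => Real.log (Real.Gamma y)) x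

/-!
The substitution `u = s t` reduces the Laplace transform of `t ^ (a - 1) * log t` to
`Γ'(a) = ψ(a) Γ(a)`, so that `∫ e^{-st} t^{a-1} (log t - ψ(a)) dt = -log s · Γ(a) s^{-a}` for
`a > 0`. For `a = α k + β` the `k`-th term of the series is thereby sent to
`-log s · s^{-β} (λ s^{-α})^k / k!`, and these sum to the right-hand side. Integrating termwise is
legitimate because the `L¹` norms of the terms are summable: the bounds
`|log t| ≤ t + t^{-δ}/δ` and `|ψ(a)| ≤ a` (log-convexity of `Γ`) make the `k`-th norm
`O(k (|λ| s^{-α})^k / k!)`.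
-/

open Set Filter

lemma differentiableAt_Gamma_of_pos {x : ℝ} (hx : 0 < x) : DifferentiableAt ℝ Gamma x :=
  differentiableAt_Gamma fun m => ((neg_nonpos.2 m.cast_nonneg).trans_lt hx).ne'

lemma differentiableAt_log_Gamma {x : ℝ} (hx : 0 < x) :
    DifferentiableAt ℝ (fun y => Real.log (Gamma y)) x :=
  (differentiableAt_Gamma_of_pos hx).log (Gamma_pos_of_pos hx).ne'

lemma deriv_Gamma_eq_digamma_mul_Gamma {x : ℝ} (hx : 0 < x) :
    deriv Gamma x = digamma x * Gamma x := by
  rw [digamma, deriv.log (differentiableAt_Gamma_of_pos hx) (Gamma_pos_of_pos hx).ne',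
    div_mul_cancel₀ _ (Gamma_pos_of_pos hx).ne']

lemma log_Gamma_add_one {x : ℝ} (hx : 0 < x) :
    Real.log (Gamma (x + 1)) = Real.log x + Real.log (Gamma x) := by
  rw [Gamma_add_one hx.ne', Real.log_mul hx.ne' (Gamma_pos_of_pos hx).ne']

lemma digamma_le_log {x : ℝ} (hx : 0 < x) : digamma x ≤ Real.log x := by
  have h := convexOn_log_Gamma.deriv_le_slope hx (by linarith : (0 : ℝ) < x + 1)
    (lt_add_one x) (differentiableAt_log_Gamma hx)
  rwa [slope_def_field, add_sub_cancel_left, div_one, Function.comp_apply, Function.comp_apply,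
    log_Gamma_add_one hx, add_sub_cancel_right] at h

lemma log_sub_one_le_digamma {x : ℝ} (hx : 1 < x) : Real.log (x - 1) ≤ digamma x := by
  have hx' : 0 < x - 1 := sub_pos.2 hx
  have h := convexOn_log_Gamma.slope_le_deriv hx' (by linarith : (0 : ℝ) < x)
    (sub_one_lt x) (differentiableAt_log_Gamma (by linarith))
  rw [slope_def_field, sub_sub_cancel, div_one, Function.comp_apply, Function.comp_apply,
    ← sub_add_cancel x 1, log_Gamma_add_one hx', sub_add_cancel] at h
  rwa [add_sub_cancel_right] at h

lemma abs_digamma_le_self {x : ℝ} (hx : 2 ≤ x) : |digamma x| ≤ x := by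
  have h₁ := digamma_le_log (by linarith : (0 : ℝ) < x)
  have h₂ := log_sub_one_le_digamma (by linarith : (1 : ℝ) < x)
  have h₃ := Real.log_le_self (by linarith : (0 : ℝ) ≤ x)
  have h₄ := Real.log_nonneg (by linarith : (1 : ℝ) ≤ x - 1)
  rw [abs_le]; constructor <;> linarith

lemma abs_log_le_self_add_rpow_neg_div {u δ : ℝ} (hu : 0 < u) (hδ : 0 < δ) :
    |Real.log u| ≤ u + u ^ (-δ) / δ := by
  have h₁ := Real.log_le_self hu.le
  have h₂ : -Real.log u ≤ u ^ (-δ) / δ := by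
    rw [← Real.log_inv, Real.rpow_neg hu.le, ← Real.inv_rpow hu.le]
    exact Real.log_le_rpow_div (inv_nonneg.2 hu.le) hδ
  have h₃ : 0 ≤ u ^ (-δ) / δ := by positivity
  rw [abs_le]; constructor <;> linarith

lemma integral_rpow_mul_exp_neg_mul {a s : ℝ} (ha : 0 < a) (hs : 0 < s) :
    ∫ t in Ioi 0, t ^ (a - 1) * exp (-(s * t)) = Gamma a * s ^ (-a) := by
  rw [integral_rpow_mul_exp_neg_mul_Ioi ha hs, one_div, Real.inv_rpow hs.le,
    ← Real.rpow_neg hs.le, mul_comm]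

lemma integrableOn_rpow_mul_exp_neg_mul {a s : ℝ} (ha : 0 < a) (hs : 0 < s) :
    IntegrableOn (fun t => t ^ (a - 1) * exp (-(s * t))) (Ioi 0) :=
  .of_integral_ne_zero <| by rw [integral_rpow_mul_exp_neg_mul ha hs]; positivity

lemma hasDerivAt_Gamma_eq_integral {a : ℝ} (ha : 0 < a) :
    HasDerivAt Gamma (∫ t in Ioi 0, t ^ (a - 1) * Real.log t * exp (-t)) a := by
  have h := (Complex.hasDerivAt_GammaIntegral (s := (a : ℂ)) (by simpa using ha)).real_of_complex
  have hcast : ∫ t in Ioi (0 : ℝ), (t : ℂ) ^ ((a : ℂ) - 1) * (Real.log t * Real.exp (-t)) =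
      ((∫ t in Ioi 0, t ^ (a - 1) * Real.log t * exp (-t) : ℝ) : ℂ) := by
    rw [← integral_complex_ofReal]
    refine setIntegral_congr_fun measurableSet_Ioi fun t ht => ?_
    rw [Complex.ofReal_mul, Complex.ofReal_mul, Complex.ofReal_cpow (le_of_lt ht)]
    push_cast
    ring
  rw [hcast, Complex.ofReal_re] at h
  refine h.congr_of_eventuallyEq ?_
  filter_upwards [eventually_gt_nhds ha] with x hx
  rw [Real.Gamma, Complex.Gamma_eq_integral (by simpa using hx)]

lemma norm_rpow_mul_log_sub_mul_exp_neg_mul_le {a δ s c t : ℝ} (hδ : 0 < δ) (ht : 0 < t) :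
    ‖t ^ (a - 1) * (Real.log t - c) * exp (-(s * t))‖ ≤
      t ^ (a + 1 - 1) * exp (-(s * t)) + δ⁻¹ * (t ^ (a - δ - 1) * exp (-(s * t)))
        + |c| * (t ^ (a - 1) * exp (-(s * t))) := by
  have hlog : |Real.log t - c| ≤ t + t ^ (-δ) / δ + |c| :=
    (abs_sub _ _).trans (by linarith [abs_log_le_self_add_rpow_neg_div ht hδ])
  have e₁ : t ^ (a + 1 - 1) = t ^ (a - 1) * t := by
    rw [← Real.rpow_add_one ht.ne']; ring_nf
  have e₂ : t ^ (a - δ - 1) = t ^ (a - 1) * t ^ (-δ) := by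
    rw [← Real.rpow_add ht]; ring_nf
  rw [norm_mul, norm_mul, Real.norm_of_nonneg (by positivity : 0 ≤ t ^ (a - 1)),
    Real.norm_of_nonneg (exp_pos _).le, Real.norm_eq_abs, e₁, e₂]
  calc t ^ (a - 1) * |Real.log t - c| * exp (-(s * t))
      ≤ t ^ (a - 1) * (t + t ^ (-δ) / δ + |c|) * exp (-(s * t)) := by gcongr
    _ = _ := by ring

lemma integrableOn_rpow_mul_log_sub_mul_exp_neg_mul {a s : ℝ} (ha : 0 < a) (hs : 0 < s)
    (c : ℝ) :
    IntegrableOn (fun t => t ^ (a - 1) * (Real.log t - c) * exp (-(s * t))) (Ioi 0) := by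
  have i₁ := integrableOn_rpow_mul_exp_neg_mul (a := a + 1) (by linarith) hs
  have i₂ := (integrableOn_rpow_mul_exp_neg_mul (a := a - a / 2) (by linarith) hs).const_mul
    (a / 2)⁻¹
  have i₃ := (integrableOn_rpow_mul_exp_neg_mul ha hs).const_mul |c|
  refine ((i₁.add i₂).add i₃).mono' (by fun_prop) ?_
  filter_upwards [ae_restrict_mem measurableSet_Ioi] with t ht
  exact norm_rpow_mul_log_sub_mul_exp_neg_mul_le (half_pos ha) ht

lemma integral_norm_rpow_mul_log_sub_mul_exp_neg_mul_le {a δ s : ℝ} (hδ : 0 < δ) (hδa : δ < a)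
    (hs : 0 < s) (c : ℝ) :
    ∫ t in Ioi 0, ‖t ^ (a - 1) * (Real.log t - c) * exp (-(s * t))‖ ≤
      Gamma (a + 1) * s ^ (-(a + 1)) + δ⁻¹ * (Gamma (a - δ) * s ^ (-(a - δ)))
        + |c| * (Gamma a * s ^ (-a)) := by
  have ha : 0 < a := hδ.trans hδa
  have i₁ := integrableOn_rpow_mul_exp_neg_mul (a := a + 1) (by linarith) hs
  have i₂ := (integrableOn_rpow_mul_exp_neg_mul (a := a - δ) (by linarith) hs).const_mul δ⁻¹
  have i₃ := (integrableOn_rpow_mul_exp_neg_mul ha hs).const_mul |c|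
  calc _ ≤ ∫ t in Ioi 0, (t ^ (a + 1 - 1) * exp (-(s * t))
        + δ⁻¹ * (t ^ (a - δ - 1) * exp (-(s * t))) + |c| * (t ^ (a - 1) * exp (-(s * t)))) := by
        refine integral_mono_of_nonneg (.of_forall fun _ => norm_nonneg _) ((i₁.add i₂).add i₃) ?_
        filter_upwards [ae_restrict_mem measurableSet_Ioi] with t ht
        exact norm_rpow_mul_log_sub_mul_exp_neg_mul_le hδ ht
    _ = _ := by
      rw [integral_add (i₁.fun_add i₂) i₃, integral_add i₁ i₂, integral_const_mul,
        integral_const_mul, integral_rpow_mul_exp_neg_mul (by linarith) hs,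
        integral_rpow_mul_exp_neg_mul (by linarith) hs, integral_rpow_mul_exp_neg_mul ha hs]

lemma integrableOn_rpow_mul_log_mul_exp_neg_mul {a s : ℝ} (ha : 0 < a) (hs : 0 < s) :
    IntegrableOn (fun t => t ^ (a - 1) * Real.log t * exp (-(s * t))) (Ioi 0) := by
  simpa only [sub_zero] using integrableOn_rpow_mul_log_sub_mul_exp_neg_mul ha hs 0

lemma integral_rpow_mul_log_mul_exp_neg_mul {a s : ℝ} (ha : 0 < a) (hs : 0 < s) :
    ∫ t in Ioi 0, t ^ (a - 1) * Real.log t * exp (-(s * t)) =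
      (digamma a - Real.log s) * Gamma a * s ^ (-a) := by
  have hsub := integral_comp_mul_left_Ioi (fun u => u ^ (a - 1) * Real.log u * exp (-u)) 0 hs
  have hscale : ∀ t ∈ Ioi (0 : ℝ), (s * t) ^ (a - 1) * Real.log (s * t) * exp (-(s * t)) =
      s ^ (a - 1) * (t ^ (a - 1) * Real.log t * exp (-(s * t))
        + Real.log s * (t ^ (a - 1) * exp (-(s * t)))) := fun t ht => by
    rw [Real.mul_rpow hs.le (le_of_lt ht), Real.log_mul hs.ne' (ne_of_gt ht)]; ring
  rw [mul_zero, smul_eq_mul, ← (hasDerivAt_Gamma_eq_integral ha).deriv,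
    deriv_Gamma_eq_digamma_mul_Gamma ha, setIntegral_congr_fun measurableSet_Ioi hscale,
    integral_const_mul, integral_add (integrableOn_rpow_mul_log_mul_exp_neg_mul ha hs)
      ((integrableOn_rpow_mul_exp_neg_mul ha hs).const_mul _),
    integral_const_mul, integral_rpow_mul_exp_neg_mul ha hs] at hsub
  rw [Real.rpow_sub_one hs.ne', Real.rpow_neg hs.le] at hsub
  rw [Real.rpow_neg hs.le]
  have : 0 < s ^ a := by positivity
  field_simp at hsub ⊢
  linear_combination hsub

theorem integral_rpow_mul_log_sub_digamma_mul_exp_neg_mul {a s : ℝ} (ha : 0 < a) (hs : 0 < s) :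
    ∫ t in Ioi 0, t ^ (a - 1) * (Real.log t - digamma a) * exp (-(s * t)) =
      -(Real.log s * Gamma a * s ^ (-a)) := by
  have hsplit : (fun t => t ^ (a - 1) * (Real.log t - digamma a) * exp (-(s * t))) =
      fun t => t ^ (a - 1) * Real.log t * exp (-(s * t))
        - digamma a * (t ^ (a - 1) * exp (-(s * t))) := by
    ext t; ring
  rw [hsplit, integral_sub (integrableOn_rpow_mul_log_mul_exp_neg_mul ha hs)
      ((integrableOn_rpow_mul_exp_neg_mul ha hs).const_mul _), integral_const_mul,
    integral_rpow_mul_log_mul_exp_neg_mul ha hs, integral_rpow_mul_exp_neg_mul ha hs]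
  ring

lemma integral_norm_rpow_mul_log_sub_digamma_mul_exp_neg_mul_le {a δ s : ℝ} (hδ : 0 < δ)
    (ha : 2 + δ ≤ a) (hs : 0 < s) :
    ∫ t in Ioi 0, ‖t ^ (a - 1) * (Real.log t - digamma a) * exp (-(s * t))‖ ≤
      Gamma a * s ^ (-a) * ((s⁻¹ + 1) * a + s ^ δ / δ) := by
  have ha₀ : 0 < a := by linarith
  have hΓ : Gamma (a - δ) ≤ Gamma a :=
    Gamma_strictMonoOn_Ici.monotoneOn (by simp; linarith) (by simp; linarith) (by linarith)
  have hψ : |digamma a| ≤ a := abs_digamma_le_self (by linarith)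
  have e₁ : s ^ (-(a + 1)) = s ^ (-a) * s⁻¹ := by
    rw [neg_add, Real.rpow_add hs, Real.rpow_neg_one]
  have e₂ : s ^ (-(a - δ)) = s ^ (-a) * s ^ δ := by
    rw [neg_sub, sub_eq_neg_add, Real.rpow_add hs]
  have : 0 < s ^ (-a) := by positivity
  calc _ ≤ Gamma (a + 1) * s ^ (-(a + 1)) + δ⁻¹ * (Gamma (a - δ) * s ^ (-(a - δ)))
        + |digamma a| * (Gamma a * s ^ (-a)) :=
        integral_norm_rpow_mul_log_sub_mul_exp_neg_mul_le hδ (by linarith) hs _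
    _ ≤ a * Gamma a * (s ^ (-a) * s⁻¹) + δ⁻¹ * (Gamma a * (s ^ (-a) * s ^ δ))
        + a * (Gamma a * s ^ (-a)) := by
        rw [Gamma_add_one ha₀.ne', e₁, e₂]
        gcongr
    _ = _ := by ring

lemma summable_nat_mul_pow_div_factorial (x : ℝ) :
    Summable fun n : ℕ => n * x ^ n / n.factorial := by
  rw [← summable_nat_add_iff 1]
  refine ((Real.summable_pow_div_factorial x).mul_left x).congr fun n => ?_
  rw [Nat.factorial_succ]
  push_cast
  field_simp
  ring

lemma rpow_neg_mul_natCast_add {s : ℝ} (hs : 0 < s) (α β : ℝ) (k : ℕ) :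
    s ^ (-(α * k + β)) = (s ^ (-α)) ^ k * s ^ (-β) := by
  rw [neg_add, Real.rpow_add hs, ← neg_mul, Real.rpow_mul hs.le, Real.rpow_natCast]

noncomputable def wrightBetaDerivTerm (α β lam : ℝ) (k : ℕ) (t : ℝ) : ℝ :=
  lam ^ k * t ^ (α * k + β - 1) * (Real.log t - digamma (α * k + β)) /
    (k.factorial * Gamma (α * k + β))

section

variable {α β lam s : ℝ}

lemma exp_mul_wrightBetaDerivTerm (k : ℕ) (t : ℝ) :
    exp (-(s * t)) * wrightBetaDerivTerm α β lam k t =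
      lam ^ k / (k.factorial * Gamma (α * k + β)) *
        (t ^ (α * k + β - 1) * (Real.log t - digamma (α * k + β)) * exp (-(s * t))) := by
  rw [wrightBetaDerivTerm]; ring

lemma integrableOn_exp_mul_wrightBetaDerivTerm (hα : 0 ≤ α) (hβ : 0 < β) (hs : 0 < s) (k : ℕ) :
    IntegrableOn (fun t => exp (-(s * t)) * wrightBetaDerivTerm α β lam k t) (Ioi 0) := by
  simp_rw [exp_mul_wrightBetaDerivTerm]
  exact (integrableOn_rpow_mul_log_sub_mul_exp_neg_mul (by positivity) hs _).const_mul _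

lemma integral_exp_mul_wrightBetaDerivTerm (hα : 0 ≤ α) (hβ : 0 < β) (hs : 0 < s) (k : ℕ) :
    ∫ t in Ioi 0, exp (-(s * t)) * wrightBetaDerivTerm α β lam k t =
      -(Real.log s * s ^ (-β)) * ((lam * s ^ (-α)) ^ k / k.factorial) := by
  have ha : 0 < α * k + β := by positivity
  simp_rw [exp_mul_wrightBetaDerivTerm]
  rw [integral_const_mul, integral_rpow_mul_log_sub_digamma_mul_exp_neg_mul ha hs,
    rpow_neg_mul_natCast_add hs, mul_pow]
  have : 0 < Gamma (α * k + β) := Gamma_pos_of_pos ha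
  field_simp

lemma summable_integral_norm_exp_mul_wrightBetaDerivTerm (hα : 0 < α) (hβ : 0 < β)
    (hs : 0 < s) :
    Summable fun k : ℕ => ∫ t in Ioi 0, ‖exp (-(s * t)) * wrightBetaDerivTerm α β lam k t‖ := by
  set δ := β / 2
  set ρ := |lam| * s ^ (-α)
  have hmajorant : Summable fun k : ℕ =>
      s ^ (-β) * ((s⁻¹ + 1) * (α * k + β) + s ^ δ / δ) * (ρ ^ k / k.factorial) :=
    (((summable_nat_mul_pow_div_factorial ρ).mul_left (s ^ (-β) * (s⁻¹ + 1) * α)).add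
      ((Real.summable_pow_div_factorial ρ).mul_left
        (s ^ (-β) * ((s⁻¹ + 1) * β + s ^ δ / δ)))).congr fun k => by ring
  have htail : ∀ᶠ k : ℕ in atTop, 2 + δ ≤ α * k + β :=
    ((tendsto_natCast_atTop_atTop.const_mul_atTop hα).atTop_add
      tendsto_const_nhds).eventually_ge_atTop _
  refine .of_norm_bounded_eventually_nat hmajorant ?_
  filter_upwards [htail] with k hk
  have ha : 0 < α * k + β := by positivity
  have : 0 < Gamma (α * k + β) := Gamma_pos_of_pos ha
  rw [Real.norm_of_nonneg (integral_nonneg fun _ => norm_nonneg _)]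
  simp_rw [exp_mul_wrightBetaDerivTerm, norm_mul]
  rw [integral_const_mul, norm_div, norm_mul, norm_pow, Real.norm_eq_abs lam,
    Real.norm_of_nonneg this.le, Real.norm_natCast]
  calc _ ≤ |lam| ^ k / (k.factorial * Gamma (α * k + β)) *
        (Gamma (α * k + β) * s ^ (-(α * k + β)) * ((s⁻¹ + 1) * (α * k + β) + s ^ δ / δ)) := by
        gcongr
        simpa only [norm_mul] using
          integral_norm_rpow_mul_log_sub_digamma_mul_exp_neg_mul_le (half_pos hβ) hk hs
    _ = _ := by
        rw [rpow_neg_mul_natCast_add hs, mul_pow]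
        field_simp

end

theorem laplace_deriv_beta_Wright2 (α β lam s : ℝ) (hα : 0 < α) (hβ : 0 < β) (hs : 0 < s) :
    (∫ t in Set.Ioi (0 : ℝ), Real.exp (-(s * t)) *
        ∑' k : ℕ, lam ^ k * t ^ (α * k + β - 1) *
          (Real.log t - digamma (α * k + β)) / (k.factorial * Real.Gamma (α * k + β)))
      = -(Real.log s * s ^ (-β) * Real.exp (lam * s ^ (-α))) := by
  have hsum := hasSum_integral_of_summable_integral_norm
    (integrableOn_exp_mul_wrightBetaDerivTerm hα.le hβ hs)
    (summable_integral_norm_exp_mul_wrightBetaDerivTerm (lam := lam) hα hβ hs)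
  simp_rw [integral_exp_mul_wrightBetaDerivTerm hα.le hβ hs] at hsum
  have hexp := (NormedSpace.expSeries_div_hasSum_exp (lam * s ^ (-α))).mul_left
    (-(Real.log s * s ^ (-β)))
  rw [← Real.exp_eq_exp_ℝ] at hexp
  calc _ = ∫ t in Ioi 0, ∑' k, exp (-(s * t)) * wrightBetaDerivTerm α β lam k t := by
        simp_rw [← tsum_mul_left]; rfl
    _ = _ := by rw [hsum.unique hexp]; ring
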